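/- arXiv:2602.00517 — 2 statements merged into one kernel-verified Lean document; each statement's English description precedes it below -/
import Mathlib

section
/- Let B, J, J' ∈ ℝ^{n×n} with ‖I − BJ‖ ≤ t, ‖B‖ ≤ β, and ‖J' − J‖ ≤ s. Define B' := B + B(2I − J'B)(I − J'B). Then ‖I − B'J'‖ ≤ (t + β·s)³. -/
open Matrix
open scoped Matrix.Norms.L2Operator

/-- `B + B * (2 - J * B) * (1 - J * B)` is the third-order hyperpower update of an approximate
inverse `B` of `J`. -/
theorem one_sub_hyperpower_step_mul {R : Type*} [Ring R] (B J : R) :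
    1 - (B + B * (2 - J * B) * (1 - J * B)) * J = (1 - B * J) ^ 3 := by
  noncomm_ring

theorem norm_one_sub_mul_le_of_perturb {R : Type*} [SeminormedRing R] (B J J' : R) :
    ‖1 - B * J'‖ ≤ ‖1 - B * J‖ + ‖B‖ * ‖J' - J‖ := by
  have hsplit : 1 - B * J' = (1 - B * J) - B * (J' - J) := by noncomm_ring
  calc ‖1 - B * J'‖ ≤ ‖1 - B * J‖ + ‖B * (J' - J)‖ := hsplit ▸ norm_sub_le _ _
    _ ≤ ‖1 - B * J‖ + ‖B‖ * ‖J' - J‖ := by gcongr; exact norm_mul_le _ _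

theorem stmt_15 {n : ℕ} (B J J' B' : Matrix (Fin n) (Fin n) ℝ) (t β s : ℝ)
    (h1 : ‖1 - B * J‖ ≤ t) (h2 : ‖B‖ ≤ β) (h3 : ‖J' - J‖ ≤ s)
    (hB' : B' = B + B * (2 - J' * B) * (1 - J' * B)) :
    ‖1 - B' * J'‖ ≤ (t + β * s) ^ 3 := by
  have hres : ‖1 - B * J'‖ ≤ t + β * s :=
    (norm_one_sub_mul_le_of_perturb B J J').trans <|
      add_le_add h1 (mul_le_mul h2 h3 (norm_nonneg _) ((norm_nonneg _).trans h2))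
  rw [hB', one_sub_hyperpower_step_mul]
  calc ‖(1 - B * J') ^ 3‖ ≤ ‖1 - B * J'‖ ^ 3 := norm_pow_le' _ (by norm_num)
    _ ≤ (t + β * s) ^ 3 := by gcongr
end

section
/- Let U* be an m×m orthogonal matrix, Σ* = diag(σ₁*, ..., σ_n*) ∈ ℝ^{m×n} (zeros below row n), V* an n×n orthogonal matrix, and U = U*(I + X), V = V*(I + Y), with A ∈ ℝ^{m×n} satisfying (U*)ᵀ A V* = Σ*. Then the i-th diagonal entry (1 ≤ i ≤ n) satisfies uᵢᵀ A vᵢ − (σᵢ*/2)(uᵢᵀuᵢ + vᵢᵀvᵢ) = [XᵀΣ*Y − (XᵀXΣ* + Σ*YᵀY)/2]_{ii}, where uᵢ, vᵢ are the i-th columns of U and V. Consequently |uᵢᵀ A vᵢ − (σᵢ*/2)(uᵢᵀuᵢ + vᵢᵀvᵢ)| ≤ 2‖Σ*‖·max{‖X‖², ‖Y‖²}. -/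
open Matrix
open scoped Matrix.Norms.L2Operator

/-!
Orthogonality of `U*` and `V*` gives `Uᵀ A V = (I + X)ᵀ Σ* (I + Y)`, `Uᵀ U = (I + X)ᵀ (I + X)` and
`Vᵀ V = (I + Y)ᵀ (I + Y)`. The `i`-th row and column of `Σ*` contain only `σᵢ*`, so in the
`(i, i)` entry the terms of order zero and one in `X`, `Y` cancel, leaving the `(i, i)` entry of
`XᵀΣ*Y - (XᵀXΣ* + Σ*YᵀY)/2`. An entry is bounded by the operator norm, and submultiplicativity
together with `‖Xᵀ‖ = ‖X‖` bounds that norm by `(3/2) ‖Σ*‖ max (‖X‖², ‖Y‖²)`.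
-/

namespace Matrix

variable {α k l m n p r : Type*}

lemma transpose_mul_mul_mul_eq [Fintype k] [Fintype l] [Fintype n] [Fintype p]
    [CommSemiring α] (Q : Matrix k l α) (B : Matrix l m α) (A : Matrix k n α) (P : Matrix n p α)
    (C : Matrix p r α) :
    (Q * B)ᵀ * A * (P * C) = Bᵀ * (Qᵀ * A * P) * C := by
  simp only [transpose_mul, Matrix.mul_assoc]

lemma one_add_transpose_mul_mul_one_add [Fintype m] [Fintype n] [DecidableEq m] [DecidableEq n]
    [CommRing α] (X : Matrix m m α) (M : Matrix m n α) (Y : Matrix n n α) :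
    (1 + X)ᵀ * M * (1 + Y) = M + Xᵀ * M + M * Y + Xᵀ * M * Y := by
  simp only [transpose_add, transpose_one, Matrix.add_mul, Matrix.mul_add, Matrix.one_mul,
    Matrix.mul_one]
  abel

lemma one_add_transpose_mul_one_add [Fintype m] [DecidableEq m] [CommRing α] (Z : Matrix m m α) :
    (1 + Z)ᵀ * (1 + Z) = 1 + Zᵀ + Z + Zᵀ * Z := by
  simpa using one_add_transpose_mul_mul_one_add Z 1 Z

lemma mul_apply_of_col_eq_ite [Fintype m] [DecidableEq m] [NonUnitalNonAssocSemiring α]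
    (B : Matrix l m α) {S : Matrix m n α} {a : m} {j : n} {s : α}
    (hS : ∀ k, S k j = if k = a then s else 0) (r : l) : (B * S) r j = B r a * s := by
  simp [mul_apply, hS]

lemma mul_apply_of_row_eq_ite [Fintype n] [DecidableEq n] [NonUnitalNonAssocSemiring α]
    {S : Matrix m n α} (C : Matrix n p α) {a : m} {j : n} {s : α}
    (hS : ∀ k, S a k = if k = j then s else 0) (c : p) : (S * C) a c = s * C j c := by
  simp [mul_apply, hS]

lemma transpose_mul_mul_of_transpose_mul_self [Fintype k] [Fintype l] [DecidableEq l]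
    [CommSemiring α] {Q : Matrix k l α} (hQ : Qᵀ * Q = 1) (B : Matrix l m α)
    (C : Matrix l n α) :
    (Q * B)ᵀ * (Q * C) = Bᵀ * C := by
  rw [transpose_mul, Matrix.mul_assoc, ← Matrix.mul_assoc Qᵀ, hQ, Matrix.one_mul]

lemma apply_sub_half_mul_gram_add_gram_eq [Fintype m] [Fintype n] [DecidableEq m] [DecidableEq n]
    [Field α] [CharZero α] {S : Matrix m n α} (X : Matrix m m α) (Y : Matrix n n α)
    {a : m} {j : n} {s : α} (hcol : ∀ k, S k j = if k = a then s else 0)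
    (hrow : ∀ k, S a k = if k = j then s else 0) :
    ((1 + X)ᵀ * S * (1 + Y) : Matrix m n α) a j -
        s / 2 * (((1 + X)ᵀ * (1 + X) : Matrix m m α) a a +
          ((1 + Y)ᵀ * (1 + Y) : Matrix n n α) j j) =
      (Xᵀ * S * Y - (1 / 2 : α) • (Xᵀ * X * S + S * (Yᵀ * Y))) a j := by
  simp only [one_add_transpose_mul_mul_one_add, one_add_transpose_mul_one_add, add_apply,
    sub_apply, smul_apply, smul_eq_mul, one_apply_eq, transpose_apply,
    mul_apply_of_col_eq_ite _ hcol, mul_apply_of_row_eq_ite _ hrow, hcol a, if_true]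
  ring

lemma norm_apply_le_l2_opNorm {𝕜 : Type*} [RCLike 𝕜] [Fintype m] [Fintype n] [DecidableEq n]
    (M : Matrix m n 𝕜) (i : m) (j : n) : ‖M i j‖ ≤ ‖M‖ := by
  set e : EuclideanSpace 𝕜 n := EuclideanSpace.single j 1
  calc ‖M i j‖ = ‖(EuclideanSpace.equiv m 𝕜).symm (M *ᵥ e) i‖ := by simp [e]
    _ ≤ ‖(EuclideanSpace.equiv m 𝕜).symm (M *ᵥ e)‖ := PiLp.norm_apply_le _ _
    _ ≤ ‖M‖ * ‖e‖ := M.l2_opNorm_mulVec e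
    _ = ‖M‖ := by simp [e]

section Real

variable [Fintype m] [Fintype n] [DecidableEq n]

lemma l2_opNorm_transpose [DecidableEq m] (M : Matrix m n ℝ) : ‖Mᵀ‖ = ‖M‖ := by
  rw [← conjTranspose_eq_transpose_of_trivial, l2_opNorm_conjTranspose]

lemma l2_opNorm_transpose_mul_self (M : Matrix m n ℝ) : ‖Mᵀ * M‖ = ‖M‖ ^ 2 := by
  rw [← conjTranspose_eq_transpose_of_trivial, l2_opNorm_conjTranspose_mul_self, sq]

lemma l2_opNorm_transpose_mul_mul_sub_half_smul_le [DecidableEq m] (X : Matrix m m ℝ)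
    (S : Matrix m n ℝ) (Y : Matrix n n ℝ) :
    ‖Xᵀ * S * Y - (1 / 2 : ℝ) • (Xᵀ * X * S + S * (Yᵀ * Y))‖ ≤
      2 * ‖S‖ * max (‖X‖ ^ 2) (‖Y‖ ^ 2) := by
  set M := max (‖X‖ ^ 2) (‖Y‖ ^ 2)
  have hS := norm_nonneg S
  have hXY : ‖X‖ * ‖Y‖ ≤ M := by
    have := two_mul_le_add_sq ‖X‖ ‖Y‖
    nlinarith [le_max_left (‖X‖ ^ 2) (‖Y‖ ^ 2), le_max_right (‖X‖ ^ 2) (‖Y‖ ^ 2)]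
  have h₁ : ‖Xᵀ * S * Y‖ ≤ ‖S‖ * M :=
    calc ‖Xᵀ * S * Y‖ ≤ ‖Xᵀ‖ * ‖S‖ * ‖Y‖ := by
          grw [l2_opNorm_mul, l2_opNorm_mul]
      _ = ‖S‖ * (‖X‖ * ‖Y‖) := by rw [l2_opNorm_transpose]; ring
      _ ≤ ‖S‖ * M := by gcongr
  have h₂ : ‖Xᵀ * X * S‖ ≤ ‖S‖ * M :=
    calc ‖Xᵀ * X * S‖ ≤ ‖X‖ ^ 2 * ‖S‖ := by
          grw [l2_opNorm_mul, l2_opNorm_transpose_mul_self]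
      _ ≤ ‖S‖ * M := by rw [mul_comm]; gcongr; exact le_max_left _ _
  have h₃ : ‖S * (Yᵀ * Y)‖ ≤ ‖S‖ * M :=
    calc ‖S * (Yᵀ * Y)‖ ≤ ‖S‖ * ‖Y‖ ^ 2 := by
          grw [l2_opNorm_mul, l2_opNorm_transpose_mul_self]
      _ ≤ ‖S‖ * M := by gcongr; exact le_max_right _ _
  calc ‖Xᵀ * S * Y - (1 / 2 : ℝ) • (Xᵀ * X * S + S * (Yᵀ * Y))‖
      ≤ ‖Xᵀ * S * Y‖ + 1 / 2 * (‖Xᵀ * X * S‖ + ‖S * (Yᵀ * Y)‖) := by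
        grw [norm_sub_le, norm_smul, norm_add_le, Real.norm_of_nonneg (by norm_num)]
    _ ≤ 2 * ‖S‖ * M := by nlinarith [mul_nonneg hS (le_trans (by positivity) hXY)]

end Real

end Matrix

theorem stmt_18_general {m n : ℕ} (hmn : n ≤ m)
    (Ustar U X : Matrix (Fin m) (Fin m) ℝ)
    (Vstar V Y : Matrix (Fin n) (Fin n) ℝ)
    (A S : Matrix (Fin m) (Fin n) ℝ) (σ : Fin n → ℝ)
    (hS : ∀ (i : Fin m) (j : Fin n), S i j = if (i : ℕ) = (j : ℕ) then σ j else 0)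
    (hUo : Ustarᵀ * Ustar = 1) (hVo : Vstarᵀ * Vstar = 1)
    (hU : U = Ustar * (1 + X)) (hV : V = Vstar * (1 + Y))
    (hA : Ustarᵀ * A * Vstar = S) :
    ∀ i : Fin n,
      (Uᵀ * A * V) (Fin.castLE hmn i) i -
          σ i / 2 * ((Uᵀ * U) (Fin.castLE hmn i) (Fin.castLE hmn i) + (Vᵀ * V) i i) =
        (Xᵀ * S * Y - (1 / 2 : ℝ) • (Xᵀ * X * S + S * (Yᵀ * Y))) (Fin.castLE hmn i) i ∧
      |(Uᵀ * A * V) (Fin.castLE hmn i) i -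
          σ i / 2 * ((Uᵀ * U) (Fin.castLE hmn i) (Fin.castLE hmn i) + (Vᵀ * V) i i)| ≤
        2 * ‖S‖ * max (‖X‖ ^ 2) (‖Y‖ ^ 2) := by
  intro i
  set a := Fin.castLE hmn i
  have hcol (k : Fin m) : S k i = if k = a then σ i else 0 := by simp [hS, a, Fin.ext_iff]
  have hrow (k : Fin n) : S a k = if k = i then σ i else 0 := by
    rw [hS]
    simp only [a, Fin.val_castLE, Fin.val_inj, eq_comm (a := i)]
    split_ifs with h <;> simp [h]
  have key : (Uᵀ * A * V) a i - σ i / 2 * ((Uᵀ * U) a a + (Vᵀ * V) i i) =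
      (Xᵀ * S * Y - (1 / 2 : ℝ) • (Xᵀ * X * S + S * (Yᵀ * Y))) a i := by
    rw [hU, hV, transpose_mul_mul_mul_eq, hA, transpose_mul_mul_of_transpose_mul_self hUo,
      transpose_mul_mul_of_transpose_mul_self hVo]
    exact apply_sub_half_mul_gram_add_gram_eq X Y hcol hrow
  refine ⟨key, ?_⟩
  rw [key, ← Real.norm_eq_abs]
  exact (norm_apply_le_l2_opNorm _ a i).trans
    (l2_opNorm_transpose_mul_mul_sub_half_smul_le X S Y)

theorem stmt_18 {m n : ℕ} (hmn : n ≤ m)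
    (Ustar U X : Matrix (Fin m) (Fin m) ℝ)
    (Vstar V Y : Matrix (Fin n) (Fin n) ℝ)
    (A S : Matrix (Fin m) (Fin n) ℝ) (σ : Fin n → ℝ)
    (hσ : ∀ i j : Fin n, i ≤ j → σ j ≤ σ i) (hσ0 : ∀ i, 0 ≤ σ i)
    (hS : ∀ (i : Fin m) (j : Fin n), S i j = if (i : ℕ) = (j : ℕ) then σ j else 0)
    (hUo : Ustarᵀ * Ustar = 1) (hVo : Vstarᵀ * Vstar = 1)
    (hU : U = Ustar * (1 + X)) (hV : V = Vstar * (1 + Y))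
    (hA : Ustarᵀ * A * Vstar = S) :
    ∀ i : Fin n,
      (Uᵀ * A * V) (Fin.castLE hmn i) i -
          σ i / 2 * ((Uᵀ * U) (Fin.castLE hmn i) (Fin.castLE hmn i) + (Vᵀ * V) i i) =
        (Xᵀ * S * Y - (1 / 2 : ℝ) • (Xᵀ * X * S + S * (Yᵀ * Y))) (Fin.castLE hmn i) i ∧
      |(Uᵀ * A * V) (Fin.castLE hmn i) i -
          σ i / 2 * ((Uᵀ * U) (Fin.castLE hmn i) (Fin.castLE hmn i) + (Vᵀ * V) i i)| ≤
        2 * ‖S‖ * max (‖X‖ ^ 2) (‖Y‖ ^ 2) :=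
  stmt_18_general hmn Ustar U X Vstar V Y A S σ hS hUo hVo hU hV hA
end
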